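/- On a star-shaped open subset U of ℝⁿ, every closed C¹ differential 1-form is exact: if ω = Σᵢ fᵢ dxᵢ with dω = 0, then there exists a C² function h : U → ℝ with ω = dh, i.e., ∂h/∂xᵢ = fᵢ for all i. -/

import Mathlib

/-!
The potential is the line integral `h x = ∫₀¹ ω(a + t(x - a)) (x - a) dt` along the ray from the
star centre. Differentiating under the integral sign (the derivative of the integrand is jointly
continuous, hence bounded near `{x} × [0, 1]` by compactness) gives
`dh_x = ∫₀¹ ω(γ t) + t • dω_{γ t}(·)(x - a) dt` with `γ t = a + t(x - a)`. Closedness says that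
`dω_y` is a symmetric bilinear map, so the integrand is `d/dt (t • ω(γ t))`, and the fundamental
theorem of calculus gives `dh_x = ω x`. Since `dh = ω` is `C¹`, `h` is `C²`.
-/

open Set Filter Topology

theorem IsCompact.exists_eventually_forall_norm_le {X Y H : Type*} [TopologicalSpace X]
    [TopologicalSpace Y] [SeminormedAddCommGroup H] {K : Set Y} (hK : IsCompact K)
    {G : X → Y → H} {x₀ : X} (hG : ∀ y ∈ K, ContinuousAt (Function.uncurry G) (x₀, y)) :
    ∃ C, ∀ᶠ x in 𝓝 x₀, ∀ y ∈ K, ‖G x y‖ ≤ C := by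
  obtain ⟨C, hC⟩ := hK.exists_bound_of_continuousOn (f := G x₀) fun y hy =>
    ((hG y hy).comp (Continuous.prodMk_right x₀).continuousAt).continuousWithinAt
  refine ⟨C + 1, hK.eventually_forall_of_forall_eventually fun y hy => ?_⟩
  exact ((hG y hy).norm.eventually (gt_mem_nhds ((hC y hy).trans_lt (lt_add_one C)))).mono
    fun _ hz => hz.le

theorem ContinuousLinearMap.apply_comm_of_pi_single {ι 𝕜 M : Type*} [Fintype ι]
    [DecidableEq ι] [NontriviallyNormedField 𝕜] [NormedAddCommGroup M] [NormedSpace 𝕜 M]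
    (B : (ι → 𝕜) →L[𝕜] (ι → 𝕜) →L[𝕜] M)
    (h : ∀ i j, B (Pi.single i 1) (Pi.single j 1) = B (Pi.single j 1) (Pi.single i 1))
    (v w : ι → 𝕜) : B v w = B w v := by
  have hB : ∀ v w : ι → 𝕜,
      B v w = ∑ i, ∑ j, v i • w j • B (Pi.single i 1) (Pi.single j 1) := by
    intro v w
    conv_lhs => rw [pi_eq_sum_univ' v, pi_eq_sum_univ' w]
    simp only [map_sum, map_smul, sum_apply, smul_apply, Finset.smul_sum, smul_comm (w _)]
    exact Finset.sum_comm
  rw [hB, hB, Finset.sum_comm]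
  simp_rw [h, smul_comm (v _)]

theorem contDiffOn_succ_of_hasFDerivAt {𝕜 E F : Type*} [NontriviallyNormedField 𝕜]
    [NormedAddCommGroup E] [NormedSpace 𝕜 E] [NormedAddCommGroup F] [NormedSpace 𝕜 F]
    {f : E → F} {f' : E → E →L[𝕜] F} {s : Set E} {n : ℕ} (hs : IsOpen s)
    (hf : ∀ x ∈ s, HasFDerivAt f (f' x) x) (hf' : ContDiffOn 𝕜 n f' s) :
    ContDiffOn 𝕜 (n + 1) f s :=
  (contDiffOn_succ_iff_fderiv_of_isOpen hs).2
    ⟨fun x hx => (hf x hx).differentiableAt.differentiableWithinAt, by simp,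
      hf'.congr fun x hx => (hf x hx).fderiv⟩

section Segment

variable {E F : Type*} [NormedAddCommGroup E] [NormedSpace ℝ E]

theorem StarConvex.eventually_forall_add_smul_sub_mem {U : Set E} {a x : E}
    (hstar : StarConvex ℝ a U) (hU : IsOpen U) (hx : x ∈ U) :
    ∀ᶠ y in 𝓝 x, ∀ t ∈ Icc (0 : ℝ) 1, a + t • (y - a) ∈ U :=
  isCompact_Icc.eventually_forall_of_forall_eventually fun t ht =>
    (by fun_prop : Continuous fun z : E × ℝ => a + z.2 • (z.1 - a)).continuousAt.preimage_mem_nhds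
      (hU.mem_nhds (hstar.add_smul_sub_mem hx ht.1 ht.2))

theorem hasFDerivAt_apply_sub_along_segment {G : Type*} [NormedAddCommGroup G]
    [NormedSpace ℝ G] {ω : E → E →L[ℝ] G} {ω' : E →L[ℝ] E →L[ℝ] G} {a x : E} {t : ℝ}
    (hω : HasFDerivAt ω ω' (a + t • (x - a))) :
    HasFDerivAt (fun y => ω (a + t • (y - a)) (y - a))
      (ω (a + t • (x - a)) + t • ω'.flip (x - a)) x := by
  have hγ : HasFDerivAt (fun y => a + t • (y - a)) (t • ContinuousLinearMap.id ℝ E) x :=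
    (((hasFDerivAt_id x).sub_const a).const_smul t).const_add a
  refine ((hω.comp x hγ).clm_apply ((hasFDerivAt_id x).sub_const a)).congr_fderiv ?_
  ext v
  simp

theorem integral_add_smul_fderiv_along_segment {G : Type*} [NormedAddCommGroup G]
    [NormedSpace ℝ G] [CompleteSpace G] {φ : E → G} {U : Set E} {a x : E} (hU : IsOpen U)
    (hφ : ContDiffOn ℝ 1 φ U) (hseg : ∀ t ∈ Icc (0 : ℝ) 1, a + t • (x - a) ∈ U) :
    ∫ t in (0 : ℝ)..1, φ (a + t • (x - a)) + t • fderiv ℝ φ (a + t • (x - a)) (x - a) = φ x := by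
  have hderiv : ∀ t ∈ uIcc (0 : ℝ) 1, HasDerivAt (fun s : ℝ => s • φ (a + s • (x - a)))
      (φ (a + t • (x - a)) + t • fderiv ℝ φ (a + t • (x - a)) (x - a)) t := by
    intro t ht
    rw [uIcc_of_le zero_le_one] at ht
    have hγ : HasDerivAt (fun s : ℝ => a + s • (x - a)) (x - a) t := by
      simpa using ((hasDerivAt_id t).smul_const (x - a)).const_add a
    have hφt := ((hφ.differentiableOn one_ne_zero).differentiableAt
      (hU.mem_nhds (hseg t ht))).hasFDerivAt.comp_hasDerivAt t hγ
    refine ((hasDerivAt_id t).smul hφt).congr_deriv ?_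
    simp [add_comm]
  have hcont : ContinuousOn (fun t : ℝ =>
      φ (a + t • (x - a)) + t • fderiv ℝ φ (a + t • (x - a)) (x - a)) (uIcc 0 1) := by
    rw [uIcc_of_le zero_le_one]
    have hγ : ContinuousOn (fun t : ℝ => a + t • (x - a)) (Icc 0 1) := by fun_prop
    exact (hφ.continuousOn.comp hγ hseg).add (continuousOn_id.smul
      (((hφ.continuousOn_fderiv_of_isOpen hU le_rfl).comp hγ hseg).clm_apply continuousOn_const))
  rw [intervalIntegral.integral_eq_sub_of_hasDerivAt hderiv hcont.intervalIntegrable]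
  simp

variable [NormedAddCommGroup F] [NormedSpace ℝ F] [CompleteSpace F]

noncomputable def segmentIntegral (ω : E → E →L[ℝ] F) (a x : E) : F :=
  ∫ t in (0 : ℝ)..1, ω (a + t • (x - a)) (x - a)

theorem StarConvex.hasFDerivAt_segmentIntegral {ω : E → E →L[ℝ] F} {U : Set E} {a x : E}
    (hstar : StarConvex ℝ a U) (hU : IsOpen U) (hω : ContDiffOn ℝ 1 ω U)
    (hclosed : ∀ y ∈ U, ∀ v w, fderiv ℝ ω y v w = fderiv ℝ ω y w v) (hx : x ∈ U) :
    HasFDerivAt (segmentIntegral ω a) (ω x) x := by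
  have hsymm : ∀ y ∈ U, (fderiv ℝ ω y).flip = fderiv ℝ ω y := fun y hy => by
    ext v w; exact hclosed y hy w v
  have hdω : ∀ y ∈ U, HasFDerivAt ω (fderiv ℝ ω y) y := fun y hy =>
    ((hω.differentiableOn one_ne_zero).differentiableAt (hU.mem_nhds hy)).hasFDerivAt
  set ω' : E → ℝ → E →L[ℝ] F := fun y t =>
    ω (a + t • (y - a)) + t • fderiv ℝ ω (a + t • (y - a)) (y - a)
  have hω'cont : ∀ t ∈ Icc (0 : ℝ) 1, ContinuousAt (Function.uncurry ω') (x, t) := by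
    intro t ht
    have hγ : ContinuousAt (fun z : E × ℝ => a + z.2 • (z.1 - a)) (x, t) := by fun_prop
    have hγU := hU.mem_nhds (hstar.add_smul_sub_mem hx ht.1 ht.2)
    have hωγ := (hω.continuousOn.continuousAt hγU).comp
      (f := fun z : E × ℝ => a + z.2 • (z.1 - a)) hγ
    have hdωγ := ((hω.continuousOn_fderiv_of_isOpen hU le_rfl).continuousAt hγU).comp
      (f := fun z : E × ℝ => a + z.2 • (z.1 - a)) hγ
    exact hωγ.add (continuous_snd.continuousAt.smul (hdωγ.clm_apply (by fun_prop)))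
  obtain ⟨C, hC⟩ := isCompact_Icc.exists_eventually_forall_norm_le hω'cont
  have hnhds := (hstar.eventually_forall_add_smul_sub_mem hU hx).and hC
  have hIoc : uIoc (0 : ℝ) 1 ⊆ Icc 0 1 := by
    rw [uIoc_of_le zero_le_one]; exact Ioc_subset_Icc_self
  have hcont : ∀ y, (∀ t ∈ Icc (0 : ℝ) 1, a + t • (y - a) ∈ U) →
      ContinuousOn (fun t : ℝ => ω (a + t • (y - a)) (y - a)) (Icc 0 1) := fun y hy =>
    (hω.continuousOn.comp (by fun_prop) hy).clm_apply continuousOn_const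
  have hderiv := intervalIntegral.hasFDerivAt_integral_of_dominated_of_fderiv_le
    (μ := MeasureTheory.volume) (bound := fun _ => C) (F' := ω') hnhds
    (hnhds.mono fun y hy => ((hcont y hy.1).mono hIoc).aestronglyMeasurable measurableSet_uIoc)
    ((hcont x fun t ht => hstar.add_smul_sub_mem hx ht.1 ht.2).intervalIntegrable_of_Icc
      zero_le_one)
    (ContinuousOn.aestronglyMeasurable (fun t ht => ((hω'cont t (hIoc ht)).comp
      (Continuous.prodMk_right x).continuousAt).continuousWithinAt) measurableSet_uIoc)
    (Eventually.of_forall fun t ht y hy => hy.2 t (hIoc ht))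
    intervalIntegrable_const
    (Eventually.of_forall fun t ht y hy => by
      have := hasFDerivAt_apply_sub_along_segment (hdω _ (hy.1 t (hIoc ht)))
      rwa [hsymm _ (hy.1 t (hIoc ht))] at this)
  rwa [integral_add_smul_fderiv_along_segment hU hω
    fun t ht => hstar.add_smul_sub_mem hx ht.1 ht.2] at hderiv

end Segment

theorem poincare_lemma_one_forms_general {n : ℕ} (U : Set (Fin n → ℝ)) (hU : IsOpen U)
    (a : Fin n → ℝ) (hstar : ∀ b ∈ U, segment ℝ a b ⊆ U)
    (f : Fin n → (Fin n → ℝ) → ℝ) (hf : ∀ i, ContDiffOn ℝ 1 (f i) U)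
    (hclosed : ∀ x ∈ U, ∀ i j,
      fderiv ℝ (f i) x (Pi.single j 1) = fderiv ℝ (f j) x (Pi.single i 1)) :
    ∃ h : (Fin n → ℝ) → ℝ, ContDiffOn ℝ 2 h U ∧ ∀ x ∈ U,
      HasFDerivAt h
        (∑ i, f i x • (ContinuousLinearMap.proj i : ((j : Fin n) → ℝ) →L[ℝ] ℝ)) x := by
  set ω : (Fin n → ℝ) → (Fin n → ℝ) →L[ℝ] ℝ := fun x =>
    ∑ i, f i x • (ContinuousLinearMap.proj i : ((j : Fin n) → ℝ) →L[ℝ] ℝ)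
  have hω : ContDiffOn ℝ 1 ω U := ContDiffOn.sum fun i _ => (hf i).smul contDiffOn_const
  have hdω : ∀ x ∈ U, fderiv ℝ ω x =
      ∑ i, (fderiv ℝ (f i) x).smulRight (ContinuousLinearMap.proj i) := fun x hx =>
    (HasFDerivAt.fun_sum fun i _ => (((hf i).differentiableOn one_ne_zero).differentiableAt
      (hU.mem_nhds hx)).hasFDerivAt.smul_const _).fderiv
  have hωclosed : ∀ x ∈ U, ∀ v w, fderiv ℝ ω x v w = fderiv ℝ ω x w v := fun x hx =>
    ContinuousLinearMap.apply_comm_of_pi_single _ fun i j => by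
      simp [hdω x hx, Pi.single_apply, hclosed x hx]
  have hpot : ∀ x ∈ U, HasFDerivAt (segmentIntegral ω a) (ω x) x := fun x hx =>
    (starConvex_iff_segment_subset.2 hstar).hasFDerivAt_segmentIntegral hU hω hωclosed hx
  exact ⟨segmentIntegral ω a, contDiffOn_succ_of_hasFDerivAt (n := 1) hU hpot hω, hpot⟩

/-- **Poincaré lemma for 1-forms.** On a star-shaped open subset `U` of `ℝⁿ`, every closed
`C¹` 1-form `ω = Σᵢ fᵢ dxᵢ` is exact: there is a `C²` function `h` with `∂h/∂xᵢ = fᵢ` on `U`,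
i.e. `ω = dh`. -/
theorem poincare_lemma_one_forms {n : ℕ} (U : Set (Fin n → ℝ)) (hU : IsOpen U)
    (a : Fin n → ℝ) (ha : a ∈ U) (hstar : ∀ b ∈ U, segment ℝ a b ⊆ U)
    (f : Fin n → (Fin n → ℝ) → ℝ) (hf : ∀ i, ContDiffOn ℝ 1 (f i) U)
    (hclosed : ∀ x ∈ U, ∀ i j,
      fderiv ℝ (f i) x (Pi.single j 1) = fderiv ℝ (f j) x (Pi.single i 1)) :
    ∃ h : (Fin n → ℝ) → ℝ, ContDiffOn ℝ 2 h U ∧ ∀ x ∈ U,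
      HasFDerivAt h
        (∑ i, f i x • (ContinuousLinearMap.proj i : ((j : Fin n) → ℝ) →L[ℝ] ℝ)) x :=
  poincare_lemma_one_forms_general U hU a hstar f hf hclosed
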